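/- For any ordered set partition U of [n] of type a composition α of n, the sets r(U) = [n-1] \ U* and s(U) = [n-1] \ δ_U(U*) correspond to compositions of n that are rearrangements of each other. -/

import Mathlib

/-!
For `S ⊆ [n-1]`, the parts of `co([n-1] \ S)` are indexed by the positions `i ∉ S`, the part
at `i` being one more than the length of the run of elements of `S` just below `i`. On each block
of `U` the permutation `δ_U` is increasing with an interval of values, so `δ_U (i+1) = δ_U i + 1`
for every `i ∈ U*`. Hence `δ_U` carries the runs of `U*` to the runs of `δ_U(U*)` preserving
their lengths, and the two compositions have the same parts.
-/

open scoped Classical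

/-- Successor in `Fin n` (cyclic, but only used under the guard `i+1 < n`). -/
def finSucc {n : ℕ} (i : Fin n) : Fin n := ⟨((i : ℕ) + 1) % n, Nat.mod_lt _ i.pos⟩

def pDes {n : ℕ} (π : Equiv.Perm (Fin n)) : Finset (Fin n) :=
  Finset.univ.filter fun i => (i : ℕ) + 1 < n ∧ π (finSucc i) < π i

/-- The inverse `J`-class `R_J^{-1} = {σ : Des σ⁻¹ ⊆ J}`, as a multiset. -/
noncomputable def RinvM (n : ℕ) (J : Finset (Fin n)) : Multiset (Equiv.Perm (Fin n)) :=
  (Finset.univ.filter fun σ : Equiv.Perm (Fin n) => pDes σ⁻¹ ⊆ J).val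

/-- Product of multisets of permutations (with multiplicity). -/
def mprod {n : ℕ} (A B : Multiset (Equiv.Perm (Fin n))) : Multiset (Equiv.Perm (Fin n)) :=
  A.bind fun a => B.map fun b => a * b

/-- The composition `co(J)` of `n` corresponding to `J ⊆ [n-1]`, as a list of parts. -/
def compList (n : ℕ) (J : Finset (Fin n)) : List ℕ :=
  let l := (J.sort (· ≤ ·)).map fun i => (i : ℕ) + 1
  List.zipWith (· - ·) (l ++ [n]) (0 :: l)

/-- `co(J)` as a multiset of parts (so `compM n J = compM n K` means `J ∼ K`). -/
def compM (n : ℕ) (J : Finset (Fin n)) : Multiset ℕ := (compList n J : Multiset ℕ)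
/-- `U` is an ordered set partition of `Fin n` of type `c` (blocks listed in order,
with `|U_i| = c_i`, pairwise disjoint, covering). -/
def IsOSP (n : ℕ) (c : List ℕ) (U : List (Finset (Fin n))) : Prop :=
  U.map Finset.card = c ∧ U.Pairwise Disjoint ∧ ∀ x : Fin n, ∃ s ∈ U, x ∈ s

/-- `U` is an ordered set partition of `Fin n` (nonempty pairwise disjoint blocks covering). -/
def OSPn (n : ℕ) (U : List (Finset (Fin n))) : Prop :=
  U.Pairwise Disjoint ∧ (∀ s ∈ U, s.Nonempty) ∧ ∀ x : Fin n, ∃ s ∈ U, x ∈ s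

/-- `δ` is the permutation `δ_U` associated to an ordered set partition `U` of type `c`:
it is increasing on each block `U_i`, and sends `U_i` onto the `i`-th consecutive
interval of values (of length `c_i`). -/
def IsDelta {n : ℕ} (c : List ℕ) (U : List (Finset (Fin n))) (δ : Equiv.Perm (Fin n)) : Prop :=
  ∀ i (h : i < U.length),
    (∀ x ∈ U.get ⟨i, h⟩, ∀ y ∈ U.get ⟨i, h⟩, x < y → δ x < δ y) ∧
    (∀ x ∈ U.get ⟨i, h⟩, (c.take i).sum ≤ (δ x : ℕ) ∧ (δ x : ℕ) < (c.take (i + 1)).sum)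

/-- `U* = {i : i and i+1 lie in the same block of U}` (0-indexed positions). -/
def Ustar (n : ℕ) (U : List (Finset (Fin n))) : Finset (Fin n) :=
  Finset.univ.filter fun i => (i : ℕ) + 1 < n ∧ ∃ s ∈ U, i ∈ s ∧ finSucc i ∈ s

/-- `runLength s x` is the largest `k` such that `x - k, …, x - 1` all lie in `s`. -/
noncomputable def runLength (s : Set ℕ) : ℕ → ℕ
  | 0 => 0
  | x + 1 => if x ∈ s then runLength s x + 1 else 0

section runLength

variable {s : Set ℕ}

@[simp] theorem runLength_zero : runLength s 0 = 0 := rfl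

theorem runLength_succ_of_mem {x : ℕ} (hx : x ∈ s) : runLength s (x + 1) = runLength s x + 1 :=
  if_pos hx

theorem runLength_succ_of_notMem {x : ℕ} (hx : x ∉ s) : runLength s (x + 1) = 0 :=
  if_neg hx

theorem runLength_eq_sub {p e : ℕ} (hp : p = 0 ∨ p - 1 ∉ s) (hpe : p ≤ e)
    (hs : ∀ x, p ≤ x → x < e → x ∈ s) : runLength s e = e - p := by
  induction e with
  | zero => simp
  | succ e ih =>
    obtain rfl | hlt := hpe.eq_or_lt
    · obtain hp | hp := hp
      · omega
      · rw [Nat.add_sub_cancel] at hp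
        rw [runLength_succ_of_notMem hp, Nat.sub_self]
    · rw [runLength_succ_of_mem (hs e (by omega) (by omega)),
        ih (by omega) fun x hx hxe => hs x hx (by omega)]
      omega

theorem zipWith_sub_eq_map_runLength (E : List ℕ) (hE : E.Pairwise (· < ·)) {p : ℕ}
    (hp : p = 0 ∨ p - 1 ∉ s) (hEs : ∀ e ∈ E, e ∉ s ∧ p ≤ e)
    (hcover : ∀ x, p ≤ x → (∃ e ∈ E, x < e) → x ∈ s ∨ x ∈ E) :
    List.zipWith (· - ·) (E.map (· + 1)) (p :: E.map (· + 1)) =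
      E.map (runLength s · + 1) := by
  induction E generalizing p with
  | nil => rfl
  | cons e E ih =>
    obtain ⟨heE, hE⟩ := List.pairwise_cons.mp hE
    obtain ⟨hes, hpe⟩ := hEs e List.mem_cons_self
    have hrun : runLength s e = e - p := by
      refine runLength_eq_sub hp hpe fun x hpx hxe => ?_
      obtain hx | hx := hcover x hpx ⟨e, List.mem_cons_self, hxe⟩
      · exact hx
      · obtain rfl | hx := List.mem_cons.mp hx
        · omega
        · exact absurd (heE x hx) (by omega)
    simp only [List.map_cons, List.zipWith_cons_cons]
    refine congrArg₂ _ (by omega) (ih hE (Or.inr (by simpa using hes)) ?_ ?_)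
    · exact fun e' he' => ⟨(hEs e' (List.mem_cons_of_mem _ he')).1, heE e' he'⟩
    · rintro x hx ⟨e', he', hxe'⟩
      obtain hx | hx := hcover x (by omega) ⟨e', List.mem_cons_of_mem _ he', hxe'⟩
      · exact Or.inl hx
      · exact Or.inr ((List.mem_cons.mp hx).resolve_left (by omega))

end runLength

theorem List.zipWith_append_right_of_length_le {α β γ : Type*} (f : α → β → γ) {l₁ : List α}
    {l₂ l₃ : List β} (h : l₁.length ≤ l₂.length) :
    List.zipWith f l₁ (l₂ ++ l₃) = List.zipWith f l₁ l₂ := by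
  rw [List.zipWith_eq_zipWith_take_min, List.zipWith_eq_zipWith_take_min (l₂ := l₂)]
  simp [List.take_append_of_le_length, h,
    Nat.min_eq_left (h.trans (Nat.le_add_right _ _))]

theorem compList_eq_zipWith_sub {n : ℕ} (hn : 0 < n) (J : Finset (Fin n)) :
    compList n J =
      List.zipWith (· - ·) (((J.sort (· ≤ ·)).map Fin.val ++ [n - 1]).map (· + 1))
        (0 :: ((J.sort (· ≤ ·)).map Fin.val ++ [n - 1]).map (· + 1)) := by
  simp only [compList, List.bind_eq_flatMap, List.pure_def]
  rw [show ∀ l : List (Fin n), l.flatMap (fun a => [Fin.val a]) = l.map Fin.val from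
    List.flatMap_pure_eq_map Fin.val]
  simp only [List.map_append, List.map_cons, List.map_nil, Nat.sub_add_cancel hn]
  rw [← List.cons_append, List.zipWith_append_right_of_length_le _ (by simp)]

theorem compList_eq_map_runLength {n : ℕ} (hn : 0 < n) {S J : Finset (Fin n)}
    (hS : ∀ i ∈ S, (i : ℕ) + 1 < n) (hJ : ∀ i, i ∈ J ↔ (i : ℕ) + 1 < n ∧ i ∉ S) :
    compList n J = ((J.sort (· ≤ ·)).map Fin.val ++ [n - 1]).map
      (runLength (Fin.val '' (S : Set (Fin n))) · + 1) := by
  set E := (J.sort (· ≤ ·)).map Fin.val ++ [n - 1]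
  have hmem_s : ∀ i : Fin n, (i : ℕ) ∈ Fin.val '' (S : Set (Fin n)) ↔ i ∈ S := fun i =>
    Fin.val_injective.mem_set_image
  have hmemE : ∀ x, x ∈ E ↔ ∃ h : x < n, (⟨x, h⟩ : Fin n) ∉ S := by
    intro x
    simp only [E, List.mem_append, List.mem_map, Finset.mem_sort, hJ, List.mem_singleton]
    constructor
    · rintro (⟨i, ⟨-, hi⟩, rfl⟩ | rfl)
      exacts [⟨i.isLt, hi⟩, ⟨by omega, fun h => by have := hS _ h; simp only at this; omega⟩]
    · rintro ⟨hx, hxS⟩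
      by_cases hx1 : x + 1 < n
      exacts [Or.inl ⟨⟨x, hx⟩, ⟨hx1, hxS⟩, rfl⟩, Or.inr (by omega)]
  have hsorted : E.Pairwise (· < ·) := by
    refine List.pairwise_append.mpr ⟨?_, List.pairwise_singleton _ _, ?_⟩
    · exact (Finset.sortedLT_sort J).pairwise.map _ fun _ _ h => h
    · simp only [List.mem_map, Finset.mem_sort, List.mem_singleton]
      rintro _ ⟨i, hi, rfl⟩ _ rfl
      have := ((hJ i).mp hi).1
      omega
  rw [compList_eq_zipWith_sub hn]
  refine zipWith_sub_eq_map_runLength E hsorted (Or.inl rfl) (fun e he => ?_) ?_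
  · obtain ⟨h, heS⟩ := (hmemE e).mp he
    exact ⟨fun hes => heS ((hmem_s ⟨e, h⟩).mp hes), Nat.zero_le _⟩
  · rintro x - ⟨e, he, hxe⟩
    obtain ⟨h, -⟩ := (hmemE e).mp he
    by_cases hxS : (⟨x, by omega⟩ : Fin n) ∈ S
    exacts [Or.inl ((hmem_s _).mpr hxS), Or.inr ((hmemE x).mpr ⟨by omega, hxS⟩)]

theorem compM_filter_notMem {n : ℕ} (hn : 0 < n) {S : Finset (Fin n)}
    (hS : ∀ i ∈ S, (i : ℕ) + 1 < n) :
    compM n (Finset.univ.filter fun i : Fin n => (i : ℕ) + 1 < n ∧ i ∉ S) =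
      Sᶜ.val.map fun i : Fin n => runLength (Fin.val '' (S : Set (Fin n))) i + 1 := by
  set J := Finset.univ.filter fun i : Fin n => (i : ℕ) + 1 < n ∧ i ∉ S
  set last : Fin n := ⟨n - 1, by omega⟩
  have hlastJ : last ∉ J := by
    simp only [J, last, Finset.mem_filter, Finset.mem_univ, true_and, not_and]
    omega
  have hcompl : Sᶜ = J.cons last hlastJ := by
    ext i
    simp only [Finset.mem_compl, Finset.mem_cons, Finset.mem_filter, Finset.mem_univ, true_and,
      J, last, Fin.ext_iff]
    constructor
    · intro hi
      by_cases hi1 : (i : ℕ) + 1 < n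
      exacts [Or.inr ⟨hi1, hi⟩, Or.inl (by omega)]
    · rintro (hi | ⟨-, hi⟩)
      exacts [fun h => by have := hS i h; omega, hi]
  rw [compM, compList_eq_map_runLength hn hS (by simp [J]), hcompl, Finset.cons_val,
    Multiset.map_cons, ← Finset.sort_eq J (· ≤ ·), Multiset.map_coe, Multiset.cons_coe,
    Multiset.coe_eq_coe]
  simp [last, Function.comp_def]

theorem finSucc_val {n : ℕ} {i : Fin n} (h : (i : ℕ) + 1 < n) : (finSucc i : ℕ) = i + 1 :=
  Nat.mod_eq_of_lt h

theorem runLength_image_apply {n : ℕ} {f : Fin n → Fin n} (hf : Function.Injective f)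
    {S : Finset (Fin n)} (hS : ∀ j ∈ S, (j : ℕ) + 1 < n ∧ (f (finSucc j) : ℕ) = f j + 1)
    (x : Fin n) :
    runLength (Fin.val '' (f '' S)) (f x) = runLength (Fin.val '' (S : Set (Fin n))) x := by
  have hpred : ∀ x : Fin n, ∀ k, (f x : ℕ) = k + 1 →
      (k ∈ Fin.val '' (f '' S) ↔ ∃ j ∈ S, (x : ℕ) = j + 1) := by
    intro x k hxk
    simp only [Set.mem_image, Finset.mem_coe]
    constructor
    · rintro ⟨_, ⟨j, hj, rfl⟩, rfl⟩
      have : finSucc j = x := hf (Fin.ext (by rw [(hS j hj).2, hxk]))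
      exact ⟨j, hj, by rw [← this, finSucc_val (hS j hj).1]⟩
    · rintro ⟨j, hj, hxj⟩
      have : finSucc j = x := Fin.ext (by rw [finSucc_val (hS j hj).1, hxj])
      exact ⟨f j, ⟨j, hj, rfl⟩, by rw [← this, (hS j hj).2] at hxk; omega⟩
  have hzero : ∀ x : Fin n, (¬ ∃ j ∈ S, (x : ℕ) = j + 1) →
      runLength (Fin.val '' (f '' S)) (f x) = 0 := by
    intro x hx
    cases h : (f x : ℕ) with
    | zero => rfl
    | succ k => exact runLength_succ_of_notMem fun hk => hx ((hpred x k h).mp hk)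
  obtain ⟨m, hm⟩ : ∃ m, (x : ℕ) = m := ⟨_, rfl⟩
  induction m generalizing x with
  | zero => rw [hm, hzero x (by omega), runLength_zero]
  | succ m ih =>
    by_cases hmS : ∃ j ∈ S, (j : ℕ) = m
    · obtain ⟨j, hj, rfl⟩ := hmS
      have hfx : (f x : ℕ) = f j + 1 := by
        rw [← (hS j hj).2, Fin.ext (hm.trans (finSucc_val (hS j hj).1).symm)]
      have hjS : j ∈ (S : Set (Fin n)) := hj
      have hfjS : (f j : ℕ) ∈ Fin.val '' (f '' S) :=
        Set.mem_image_of_mem _ (Set.mem_image_of_mem f hjS)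
      rw [hfx, hm, runLength_succ_of_mem hfjS, runLength_succ_of_mem (Set.mem_image_of_mem _ hjS),
        ih j rfl]
    · have hm_notMem : m ∉ Fin.val '' (S : Set (Fin n)) := fun ⟨j, hj, h⟩ => hmS ⟨j, hj, h⟩
      rw [hm, hzero x (fun ⟨j, hj, h⟩ => hmS ⟨j, hj, by omega⟩),
        runLength_succ_of_notMem hm_notMem]

section IsDelta

variable {n : ℕ} {c : List ℕ} {U : List (Finset (Fin n))} {δ : Equiv.Perm (Fin n)}

theorem IsDelta.mem_of_mem_interval (hδ : IsDelta c U δ)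
    (hU : ∀ x : Fin n, ∃ s ∈ U, x ∈ s) {b : ℕ} (hb : b < U.length) {z : Fin n}
    (hz : (c.take b).sum ≤ (δ z : ℕ) ∧ (δ z : ℕ) < (c.take (b + 1)).sum) :
    z ∈ U.get ⟨b, hb⟩ := by
  obtain ⟨_, ht, hzt⟩ := hU z
  obtain ⟨a, rfl⟩ := List.mem_iff_get.mp ht
  have hza := (hδ a a.2).2 z hzt
  have hmono := List.monotone_sum_take c
  obtain hab | rfl | hba := lt_trichotomy (a : ℕ) b
  · have : (c.take (a + 1)).sum ≤ (c.take b).sum := hmono hab; omega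
  · exact hzt
  · have : (c.take (b + 1)).sum ≤ (c.take a).sum := hmono hba; omega

theorem IsDelta.apply_finSucc (hδ : IsDelta c U δ) (hU : ∀ x : Fin n, ∃ s ∈ U, x ∈ s)
    {i : Fin n} (hi : i ∈ Ustar n U) :
    (i : ℕ) + 1 < n ∧ (δ (finSucc i) : ℕ) = δ i + 1 := by
  obtain ⟨hi1, _, hsU, his, hi1s⟩ := (Finset.mem_filter.mp hi).2
  refine ⟨hi1, ?_⟩
  obtain ⟨b, rfl⟩ := List.mem_iff_get.mp hsU
  have hmono : StrictMonoOn δ (U.get b : Set (Fin n)) := fun x hx y hy => (hδ b b.2).1 x hx y hy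
  have hlt : i < finSucc i := Fin.lt_def.mpr (by rw [finSucc_val hi1]; omega)
  have hδlt : (δ i : ℕ) < δ (finSucc i) := hmono his hi1s hlt
  by_contra hne
  set z := δ.symm ⟨δ i + 1, by omega⟩
  have hδz : (δ z : ℕ) = δ i + 1 := by simp [z]
  have hzb : z ∈ U.get b := by
    refine hδ.mem_of_mem_interval hU b.2 ⟨?_, ?_⟩
    · have := ((hδ b b.2).2 i his).1; omega
    · have := ((hδ b b.2).2 _ hi1s).2; omega
  have h1 : i < z := (hmono.lt_iff_lt his hzb).mp (Fin.lt_def.mpr (by omega))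
  have h2 : z < finSucc i := (hmono.lt_iff_lt hzb hi1s).mp (Fin.lt_def.mpr (by omega))
  rw [Fin.lt_def] at h1 h2
  rw [finSucc_val hi1] at h2
  omega

end IsDelta

/-- For any ordered set partition `U` of `[n]`, the subsets
`r(U) = [n-1] \ U*` and `s(U) = [n-1] \ δ_U(U*)` of `[n-1]` correspond to
compositions of `n` that are rearrangements of each other. -/
theorem r_sim_s (n : ℕ) (U : List (Finset (Fin n))) (hU : OSPn n U)
    (δ : Equiv.Perm (Fin n)) (hδ : IsDelta (U.map Finset.card) U δ) :
    compM n (Finset.univ.filter fun i : Fin n =>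
        (i : ℕ) + 1 < n ∧ i ∉ Ustar n U) =
    compM n (Finset.univ.filter fun i : Fin n =>
        (i : ℕ) + 1 < n ∧ ∀ u ∈ Ustar n U, δ u ≠ i) := by
  obtain rfl | hn := n.eq_zero_or_pos
  · congr 1
  set S := Ustar n U
  have hS : ∀ j ∈ S, (j : ℕ) + 1 < n ∧ (δ (finSucc j) : ℕ) = δ j + 1 :=
    fun j hj => hδ.apply_finSucc hU.2.2 hj
  have hSδ : ∀ i ∈ S.image δ, (i : ℕ) + 1 < n := by
    simp only [Finset.mem_image]
    rintro _ ⟨j, hj, rfl⟩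
    have := (δ (finSucc j)).isLt
    have := (hS j hj).2
    omega
  have hcompl : (S.image δ)ᶜ = Sᶜ.map δ.toEmbedding := by
    apply Finset.coe_injective
    push_cast
    exact (δ.image_compl S).symm
  have hnotMem : ∀ i, (∀ u ∈ S, δ u ≠ i) ↔ i ∉ S.image δ := by simp
  simp only [hnotMem]
  rw [compM_filter_notMem hn fun j hj => (hS j hj).1, compM_filter_notMem hn hSδ, hcompl,
    Finset.map_val, Multiset.map_map]
  refine Multiset.map_congr rfl fun x _ => ?_
  simp [Finset.coe_image, runLength_image_apply δ.injective hS]
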